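/- Let Q be a field and φ : Q → Q a ring endomorphism with fixed field F = {a ∈ Q : φ(a) = a}. Extend φ to a ring endomorphism φ̂ of the rational function field Q(X) acting coefficientwise on polynomials and fixing X. Let n ≥ 1, let Δ be an invertible n × n matrix with entries in Q, and let x ∈ Q(X)^n satisfy x = Δ · φ̂(x), where φ̂ is applied entrywise. Then denom(x) has all its coefficients in F, and consequently every entry of x lies in the Q-subalgebra of Q(X) generated by the subfield F(X). -/

import Mathlib

/-!
Let `D` be the monic lowest common denominator of `x`. Each `φ̂(xⱼ)` has a denominator
dividing `φ(D)`, and `xᵢ` is a `Q`-linear combination of them, so `D ∣ φ(D)`. Both are monic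
of the same degree, hence `φ(D) = D`. Then `xᵢ = pᵢ / D` with `pᵢ ∈ Q[X]` and `1 / D ∈ F(X)`.
-/

open Polynomial
open scoped nonZeroDivisors

namespace Polynomial

variable {R : Type*}

theorem monic_finset_lcm {ι K : Type*} [Field K] [DecidableEq K] {s : Finset ι} {f : ι → K[X]}
    (hf : ∀ j ∈ s, f j ≠ 0) : (s.lcm f).Monic := by
  have hne : s.lcm f ≠ 0 := fun h => by
    obtain ⟨j, hj, hj0⟩ := Finset.lcm_eq_zero_iff.1 h
    exact hf j hj hj0
  rw [← Finset.normalize_lcm]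
  exact monic_normalize hne

theorem Monic.map_eq_self_of_dvd_map [CommRing R] [Nontrivial R] {p : R[X]} (hp : p.Monic)
    (φ : R →+* R) (hdvd : p ∣ p.map φ) : p.map φ = p :=
  eq_of_monic_of_dvd_of_natDegree_le hp (hp.map φ) hdvd (hp.natDegree_map φ).le

theorem coeff_fixed_iff_map_eq [Semiring R] (φ : R →+* R) (p : R[X]) :
    (∀ k, φ (p.coeff k) = p.coeff k) ↔ p.map φ = p := by
  simp only [Polynomial.ext_iff, coeff_map]

end Polynomial

namespace RatFunc

variable {K : Type*} [Field K]

theorem denom_mapRingHom_dvd {L : Type*} [Field L] (φ : K →+* L)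
    (hφ : K[X]⁰ ≤ L[X]⁰.comap (Polynomial.mapRingHom φ)) (f : RatFunc K) :
    (mapRingHom (Polynomial.mapRingHom φ) hφ f).denom ∣ f.denom.map φ := by
  rw [denom_dvd ((Polynomial.map_ne_zero_iff φ.injective).2 f.denom_ne_zero)]
  refine ⟨f.num.map φ, ?_⟩
  conv_lhs => rw [← num_div_denom f]
  rw [coe_mapRingHom_eq_coe_map, map_apply_div]
  rfl

theorem denom_algebraMap_mul_dvd {f : RatFunc K} {q : K[X]} (hq : q ≠ 0) (hf : f.denom ∣ q)
    (r : K[X]) : (algebraMap K[X] (RatFunc K) r * f).denom ∣ q := by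
  obtain ⟨p, rfl⟩ := (denom_dvd hq).1 hf
  rw [denom_dvd hq]
  exact ⟨r * p, by rw [map_mul, mul_div_assoc]⟩

theorem denom_sum_dvd {ι : Type*} {s : Finset ι} {f : ι → RatFunc K} {q : K[X]} (hq : q ≠ 0)
    (hf : ∀ j ∈ s, (f j).denom ∣ q) : (∑ j ∈ s, f j).denom ∣ q := by
  choose p hp using fun j (hj : j ∈ s) => (denom_dvd hq).1 (hf j hj)
  rw [denom_dvd hq]
  refine ⟨∑ j ∈ s.attach, p j.1 j.2, ?_⟩
  rw [map_sum, Finset.sum_div, ← Finset.sum_attach]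
  exact Finset.sum_congr rfl fun j _ => hp j.1 j.2

theorem mem_adjoin_of_denom_dvd {S : Set (RatFunc K)} (hX : X ∈ S) {q : K[X]} (hq : q ≠ 0)
    (hqS : 1 / algebraMap K[X] (RatFunc K) q ∈ S) {f : RatFunc K} (hf : f.denom ∣ q) :
    f ∈ Algebra.adjoin K S := by
  obtain ⟨p, rfl⟩ := (denom_dvd hq).1 hf
  rw [div_eq_mul_one_div, ← aeval_X_left_eq_algebraMap]
  exact mul_mem (Algebra.adjoin_mono (Set.singleton_subset_iff.2 hX)
    (aeval_mem_adjoin_singleton K X)) (Algebra.subset_adjoin hqS)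

end RatFunc

/-- **Solutions of `x = Δ · φ̂(x)` have denominators with coefficients in the fixed field.**
Let `Q` be a field, `φ : Q → Q` a ring endomorphism with fixed field `F`, and `φ̂` its
extension to `Q(X)` fixing `X` (acting coefficientwise on polynomials).  If `Δ` is an
invertible `n × n` matrix over `Q` and `x ∈ Q(X)^n` satisfies `x = Δ · φ̂(x)`, then the
(monic) least common denominator of `x` has all its coefficients in `F`, and every entry of
`x` lies in the `Q`-subalgebra of `Q(X)` generated by the subfield `F(X)`. -/
theorem stmt10 {Q : Type*} [Field Q] [DecidableEq Q] (φ : Q →+* Q)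
    (n : ℕ)
    (Δ : Matrix (Fin n) (Fin n) Q)
    (x : Fin n → RatFunc Q)
    (hx : ∀ i : Fin n, x i = ∑ j : Fin n, RatFunc.C (Δ i j) *
      RatFunc.mapRingHom (Polynomial.mapRingHom φ)
        (fun g hg => by
          simpa only [Submonoid.mem_comap, Polynomial.coe_mapRingHom,
            mem_nonZeroDivisors_iff_ne_zero] using
            (Polynomial.map_ne_zero_iff φ.injective).mpr
              (mem_nonZeroDivisors_iff_ne_zero.mp hg))
        (x j)) :
    (∀ k : ℕ, φ ((Finset.univ.lcm (fun j : Fin n => (x j).denom)).coeff k) =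
        (Finset.univ.lcm (fun j : Fin n => (x j).denom)).coeff k) ∧
    ∀ i : Fin n, x i ∈ Algebra.adjoin Q
      {f : RatFunc Q | ∃ a b : Polynomial Q,
        (∀ k : ℕ, φ (a.coeff k) = a.coeff k) ∧
        (∀ k : ℕ, φ (b.coeff k) = b.coeff k) ∧ b ≠ 0 ∧
        f = algebraMap (Polynomial Q) (RatFunc Q) a /
            algebraMap (Polynomial Q) (RatFunc Q) b} := by
  set D := Finset.univ.lcm fun j => (x j).denom
  have hD : D.Monic := monic_finset_lcm fun j _ => (x j).denom_ne_zero
  have hφD : D.map φ ≠ 0 := (hD.map φ).ne_zero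
  have hdvd_D : ∀ j, (x j).denom ∣ D := fun j => Finset.dvd_lcm (Finset.mem_univ j)
  have hdvd_φD : ∀ i, (x i).denom ∣ D.map φ := fun i => by
    rw [hx i]
    refine RatFunc.denom_sum_dvd hφD fun j _ => ?_
    rw [← RatFunc.algebraMap_C]
    refine RatFunc.denom_algebraMap_mul_dvd hφD ?_ _
    exact (RatFunc.denom_mapRingHom_dvd φ _ (x j)).trans (map_dvd (mapRingHom φ) (hdvd_D j))
  have hD_fixed : ∀ k, φ (D.coeff k) = D.coeff k := (coeff_fixed_iff_map_eq φ D).2 <|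
    hD.map_eq_self_of_dvd_map φ (Finset.lcm_dvd fun j _ => hdvd_φD j)
  have one_fixed := (coeff_fixed_iff_map_eq φ 1).2 (Polynomial.map_one φ)
  refine ⟨hD_fixed, fun i => RatFunc.mem_adjoin_of_denom_dvd ?_ hD.ne_zero ?_ (hdvd_D i)⟩
  · exact ⟨X, 1, (coeff_fixed_iff_map_eq φ X).2 (map_X φ), one_fixed, one_ne_zero, by simp⟩
  · exact ⟨1, D, one_fixed, hD_fixed, hD.ne_zero, by rw [map_one]⟩
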